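/- arXiv:2510.19197 — 6 statements merged into one kernel-verified Lean document; each statement's English description precedes it below -/
import Mathlib

section
/- Let T be a join tree of a hypergraph, and let v_1, v_2, ..., v_k be a path in T (a sequence of nodes where consecutive nodes are adjacent in T). If v_1 ∩ v_2 ⊆ v_k, then the tree obtained by removing the edge between v_1 and v_2 and adding an edge between v_1 and v_k is again a join tree. -/
open SimpleGraph

private lemma reach_trans_aux {α : Type*} {G H : SimpleGraph α}
    (h : ∀ a b, G.Adj a b → H.Reachable a b) {x y : α} (hr : G.Reachable x y) :
    H.Reachable x y := by
  obtain ⟨w⟩ := hr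
  induction w with
  | nil => exact Reachable.refl _
  | cons ha _ ih => exact (h _ _ ha).trans ih

private lemma chain_reach_aux {α : Type*} {H : SimpleGraph α} (w : ℕ → α) (l : ℕ) :
    ∀ r, l ≤ r → (∀ i, l ≤ i → i < r → H.Adj (w i) (w (i + 1))) → H.Reachable (w l) (w r) := by
  intro r hlr
  induction r, hlr using Nat.le_induction with
  | base => exact fun _ => Reachable.refl _
  | succ n hn ih =>
    intro hadj
    exact (ih fun i h1 h2 => hadj i h1 (by omega)).trans (hadj n hn (by omega)).reachable

/-- If `v 0, …, v (k-1)` is a path in a join tree `T` (nodes `ι`,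
each node `i` carrying the hyperedge `N i`), and `N (v 0) ∩ N (v 1) ⊆ N (v (k-1))`,
then removing the edge `v 0 — v 1` and adding the edge `v 0 — v (k-1)` yields a join tree. -/
theorem join_tree_rearrange {V ι : Type*} [Fintype ι] (N : ι → Set V) (T : SimpleGraph ι)
    (hT : T.IsTree)
    (hjoin : ∀ u : V, (T.induce {i | u ∈ N i}).Preconnected)
    (k : ℕ) (hk : 2 ≤ k) (v : Fin k → ι) (hv : Function.Injective v)
    (hpath : ∀ i : ℕ, (h : i + 1 < k) → T.Adj (v ⟨i, by omega⟩) (v ⟨i + 1, h⟩))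
    (hsub : N (v ⟨0, by omega⟩) ∩ N (v ⟨1, by omega⟩) ⊆ N (v ⟨k - 1, by omega⟩)) :
    let T' := SimpleGraph.fromEdgeSet
      ((T.edgeSet \ {s(v ⟨0, by omega⟩, v ⟨1, by omega⟩)}) ∪ {s(v ⟨0, by omega⟩, v ⟨k - 1, by omega⟩)})
    T'.IsTree ∧ ∀ u : V, (T'.induce {i | u ∈ N i}).Preconnected := by
  intro T'
  classical
  obtain ⟨hconn, hacyc⟩ := hT
  have hk1 : k - 1 < k := by omega
  let wv : ℕ → ι := fun i => v ⟨min i (k - 1), by omega⟩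
  have hwv : ∀ (i : ℕ) (h : i < k), wv i = v ⟨i, h⟩ := by
    intro i h
    exact congrArg v (Fin.ext (by simp only; omega))
  have hinj : ∀ i j, i < k → j < k → wv i = wv j → i = j := by
    intro i j hi hj hij
    rw [hwv i hi, hwv j hj] at hij
    exact congrArg Fin.val (hv hij)
  have hne : ∀ i j, i < k → j < k → i ≠ j → wv i ≠ wv j :=
    fun i j hi hj hij h => hij (hinj i j hi hj h)
  have hadjT : ∀ i, i + 1 < k → T.Adj (wv i) (wv (i + 1)) := by
    intro i h
    rw [hwv i (by omega), hwv (i + 1) h]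
    exact hpath i h
  have hT'def : T' = SimpleGraph.fromEdgeSet
      ((T.edgeSet \ {s(wv 0, wv 1)}) ∪ {s(wv 0, wv (k - 1))}) := by
    rw [hwv 0 (by omega), hwv 1 (by omega), hwv (k - 1) hk1]
  have hne0m : wv 0 ≠ wv (k - 1) := hne 0 (k - 1) (by omega) hk1 (by omega)
  have hT'adj : ∀ x y : ι, T'.Adj x y ↔
      ((T.Adj x y ∧ s(x, y) ≠ s(wv 0, wv 1)) ∨ s(x, y) = s(wv 0, wv (k - 1))) ∧ x ≠ y := by
    intro x y
    rw [hT'def, SimpleGraph.fromEdgeSet_adj]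
    simp only [Set.mem_union, Set.mem_diff, Set.mem_singleton_iff, SimpleGraph.mem_edgeSet]
  have hfadjT' : T'.Adj (wv 0) (wv (k - 1)) := (hT'adj _ _).2 ⟨Or.inr rfl, hne0m⟩
  have hmid_ne : ∀ i, 1 ≤ i → i + 1 < k → s(wv i, wv (i + 1)) ≠ s(wv 0, wv 1) := by
    intro i h1 h2 hcon
    rcases Sym2.eq_iff.mp hcon with ⟨ha, _⟩ | ⟨_, hb⟩
    · exact absurd (hinj i 0 (by omega) (by omega) ha) (by omega)
    · exact absurd (hinj (i + 1) 0 h2 (by omega) hb) (by omega)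
  have hmidT' : ∀ i, 1 ≤ i → i + 1 < k → T'.Adj (wv i) (wv (i + 1)) := by
    intro i h1 h2
    exact (hT'adj _ _).2 ⟨Or.inl ⟨hadjT i h2, hmid_ne i h1 h2⟩,
      hne i (i + 1) (by omega) h2 (by omega)⟩
  have chainR : ∀ (H : SimpleGraph ι) (l r : ℕ), l ≤ r → r ≤ k - 1 →
      (∀ j, l ≤ j → j < r → H.Adj (wv j) (wv (j + 1))) → H.Reachable (wv l) (wv r) := by
    intro H l r hlr hrk hadj
    exact chain_reach_aux wv l r hlr hadj
  have hsdiffAdj : ∀ (e : Sym2 ι) (x y : ι), T.Adj x y → s(x, y) ≠ e →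
      (T \ SimpleGraph.fromEdgeSet {e}).Adj x y := by
    intro e x y hxy hne'
    rw [SimpleGraph.sdiff_adj]
    exact ⟨hxy, fun hcon => hne' (by simpa using ((SimpleGraph.fromEdgeSet_adj _).mp hcon).1)⟩
  have hbridge : ¬(T \ SimpleGraph.fromEdgeSet {s(wv 0, wv 1)}).Reachable (wv 0) (wv 1) :=
    (SimpleGraph.isBridge_iff.mp
      (SimpleGraph.isAcyclic_iff_forall_adj_isBridge.mp hacyc (hadjT 0 (by omega))))
  have hchainTe : (T \ SimpleGraph.fromEdgeSet {s(wv 0, wv 1)}).Reachable (wv 1) (wv (k - 1)) :=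
    chainR _ 1 (k - 1) (by omega) le_rfl
      (fun j hj1 hj2 => hsdiffAdj _ _ _ (hadjT j (by omega)) (hmid_ne j hj1 (by omega)))
  -- Connectivity of T'
  have hT'pre : T'.Preconnected := by
    intro x y
    refine reach_trans_aux (fun p q hpq => ?_) (hconn.preconnected x y)
    by_cases hcase : s(p, q) = s(wv 0, wv 1)
    · have hr : T'.Reachable (wv 0) (wv 1) :=
        hfadjT'.reachable.trans
          (chainR T' 1 (k - 1) (by omega) le_rfl
            (fun j hj1 hj2 => hmidT' j hj1 (by omega))).symm
      rcases Sym2.eq_iff.mp hcase with ⟨rfl, rfl⟩ | ⟨rfl, rfl⟩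
      · exact hr
      · exact hr.symm
    · exact ((hT'adj p q).2 ⟨Or.inl ⟨hpq, hcase⟩, hpq.ne⟩).reachable
  have hT'conn : T'.Connected := by have := hconn.nonempty; exact ⟨hT'pre⟩
  -- Acyclicity of T'
  have hT'acyc : T'.IsAcyclic := by
    intro x c hc
    by_cases hfc : s(wv 0, wv (k - 1)) ∈ c.edges
    · have hreach := (SimpleGraph.adj_and_reachable_delete_edges_iff_exists_cycle.mpr
        ⟨x, c, hc, hfc⟩).2
      have hmono : T' \ SimpleGraph.fromEdgeSet {s(wv 0, wv (k - 1))} ≤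
          T \ SimpleGraph.fromEdgeSet {s(wv 0, wv 1)} := by
        intro p q hpq
        rw [SimpleGraph.sdiff_adj] at hpq ⊢
        obtain ⟨hpq1, hpq2⟩ := hpq
        have hnf : s(p, q) ≠ s(wv 0, wv (k - 1)) := by
          intro hcon
          exact hpq2 ((SimpleGraph.fromEdgeSet_adj _).2 ⟨by simp [hcon], hpq1.ne⟩)
        rcases ((hT'adj p q).1 hpq1).1 with ⟨h1, h2⟩ | h1
        · exact ⟨h1, fun hcon => h2 (by simpa using ((SimpleGraph.fromEdgeSet_adj _).1 hcon).1)⟩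
        · exact absurd h1 hnf
      have hIm : (T \ SimpleGraph.fromEdgeSet {s(wv 0, wv 1)}).Reachable (wv 0) (wv (k - 1)) :=
        hreach.mono hmono
      exact hbridge (hIm.trans hchainTe.symm)
    · have hedges : ∀ e' ∈ c.edges, e' ∈ T.edgeSet := by
        intro e' he'
        have h1 := c.edges_subset_edgeSet he'
        rw [hT'def, SimpleGraph.edgeSet_fromEdgeSet] at h1
        rcases h1.1 with h2 | h2
        · exact h2.1
        · rw [Set.mem_singleton_iff] at h2
          exact absurd (h2 ▸ he') hfc
      exact hacyc (c.transfer T hedges) (hc.transfer hedges)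
  refine ⟨⟨hT'conn, hT'acyc⟩, ?_⟩
  -- the join-tree condition
  intro u
  set S : Set ι := {i | u ∈ N i} with hSdef
  have hinduceAdj : ∀ (H : SimpleGraph ι) (p q : ↥S), H.Adj ↑p ↑q → (H.induce S).Adj p q :=
    fun H p q h => h
  by_cases hcase : wv 0 ∈ S ∧ wv 1 ∈ S
  · obtain ⟨h0S, h1S⟩ := hcase
    have hmS : wv (k - 1) ∈ S := by
      have h0' : u ∈ N (v ⟨0, by omega⟩) := by rwa [hwv 0 (by omega)] at h0S
      have h1' : u ∈ N (v ⟨1, by omega⟩) := by rwa [hwv 1 (by omega)] at h1S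
      have := hsub ⟨h0', h1'⟩
      show u ∈ N (wv (k - 1))
      rwa [hwv (k - 1) hk1]
    obtain ⟨w0⟩ := hjoin u ⟨wv 1, h1S⟩ ⟨wv (k - 1), hmS⟩
    let W : T.Walk (wv 1) (wv (k - 1)) := w0.map (SimpleGraph.Embedding.induce S).toHom
    have hWsupp : ∀ x ∈ W.support, x ∈ S := by
      intro x hx
      simp only [W] at hx; erw [SimpleGraph.Walk.support_map] at hx
      obtain ⟨x', _, rfl⟩ := List.mem_map.mp hx
      exact x'.2
    have hallS : ∀ i, 1 ≤ i → i < k → wv i ∈ S := by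
      intro i hi1 hik
      rcases eq_or_lt_of_le hi1 with h | hi2
      · rw [← h]; exact h1S
      · by_contra hnot
        have hadj_i : T.Adj (wv (i - 1)) (wv i) := by
          have := hadjT (i - 1) (by omega)
          rwa [show i - 1 + 1 = i from by omega] at this
        have hbr := (SimpleGraph.isBridge_iff.mp
          (SimpleGraph.isAcyclic_iff_forall_adj_isBridge.mp hacyc hadj_i))
        have hWtrans : ∀ e' ∈ W.edges,
            e' ∈ (T \ SimpleGraph.fromEdgeSet {s(wv (i - 1), wv i)}).edgeSet := by
          intro e' he'
          rw [SimpleGraph.edgeSet_sdiff, SimpleGraph.edgeSet_fromEdgeSet]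
          refine ⟨W.edges_subset_edgeSet he', ?_⟩
          rintro ⟨h1, -⟩
          rw [Set.mem_singleton_iff] at h1
          exact hnot (hWsupp _ (W.snd_mem_support_of_mem_edges (h1 ▸ he')))
        have hrW : (T \ SimpleGraph.fromEdgeSet {s(wv (i - 1), wv i)}).Reachable
            (wv 1) (wv (k - 1)) := ⟨W.transfer _ hWtrans⟩
        have hr1 : (T \ SimpleGraph.fromEdgeSet {s(wv (i - 1), wv i)}).Reachable
            (wv 1) (wv (i - 1)) := by
          refine chainR _ 1 (i - 1) (by omega) (by omega) (fun j hj1 hj2 => ?_)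
          refine hsdiffAdj _ _ _ (hadjT j (by omega)) (fun hcon => ?_)
          rcases Sym2.eq_iff.mp hcon with ⟨ha, _⟩ | ⟨ha, _⟩
          · exact absurd (hinj j (i - 1) (by omega) (by omega) ha) (by omega)
          · exact absurd (hinj j i (by omega) (by omega) ha) (by omega)
        have hr3 : (T \ SimpleGraph.fromEdgeSet {s(wv (i - 1), wv i)}).Reachable
            (wv i) (wv (k - 1)) := by
          refine chainR _ i (k - 1) (by omega) le_rfl (fun j hj1 hj2 => ?_)
          refine hsdiffAdj _ _ _ (hadjT j (by omega)) (fun hcon => ?_)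
          rcases Sym2.eq_iff.mp hcon with ⟨ha, _⟩ | ⟨_, hb⟩
          · exact absurd (hinj j (i - 1) (by omega) (by omega) ha) (by omega)
          · exact absurd (hinj (j + 1) (i - 1) (by omega) (by omega) hb) (by omega)
        exact hbr ((hr1.symm.trans hrW).trans hr3.symm)
    -- now prove preconnectedness of T'.induce S
    intro x y
    refine reach_trans_aux (fun p q hpq => ?_) (hjoin u x y)
    have hTadj : T.Adj ↑p ↑q := hpq
    by_cases hcase2 : s((p : ι), (q : ι)) = s(wv 0, wv 1)
    · let ws : ℕ → ↥S := fun j => ⟨wv (min (max j 1) (k - 1)), hallS _ (by omega) (by omega)⟩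
      have hws : ∀ j (h1 : 1 ≤ j) (h2 : j ≤ k - 1),
          ws j = ⟨wv j, hallS j h1 (by omega)⟩ := by
        intro j h1 h2
        apply Subtype.ext
        show wv (min (max j 1) (k - 1)) = wv j
        congr 1
        omega
      have hch : (T'.induce S).Reachable (ws 1) (ws (k - 1)) := by
        refine chain_reach_aux ws 1 (k - 1) (by omega) (fun j hj1 hj2 => ?_)
        rw [hws j hj1 (by omega), hws (j + 1) (by omega) (by omega)]
        exact hinduceAdj T' _ _ (hmidT' j hj1 (by omega))
      rw [hws 1 le_rfl (by omega), hws (k - 1) (by omega) le_rfl] at hch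
      have hr01 : (T'.induce S).Reachable ⟨wv 0, h0S⟩ ⟨wv 1, h1S⟩ :=
        (hinduceAdj T' ⟨wv 0, h0S⟩ ⟨wv (k - 1), hmS⟩ hfadjT').reachable.trans hch.symm
      rcases Sym2.eq_iff.mp hcase2 with ⟨h1, h2⟩ | ⟨h1, h2⟩
      · have hp : p = ⟨wv 0, h0S⟩ := Subtype.ext h1
        have hq : q = ⟨wv 1, h1S⟩ := Subtype.ext h2
        rw [hp, hq]; exact hr01
      · have hp : p = ⟨wv 1, h1S⟩ := Subtype.ext h1
        have hq : q = ⟨wv 0, h0S⟩ := Subtype.ext h2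
        rw [hp, hq]; exact hr01.symm
    · exact (hinduceAdj T' p q
        ((hT'adj _ _).2 ⟨Or.inl ⟨hTadj, hcase2⟩, hTadj.ne⟩)).reachable
  · intro x y
    refine reach_trans_aux (fun p q hpq => ?_) (hjoin u x y)
    have hTadj : T.Adj ↑p ↑q := hpq
    have hnotE : s((p : ι), (q : ι)) ≠ s(wv 0, wv 1) := by
      intro hcon
      rcases Sym2.eq_iff.mp hcon with ⟨h1, h2⟩ | ⟨h1, h2⟩
      · exact hcase ⟨h1 ▸ p.2, h2 ▸ q.2⟩
      · exact hcase ⟨h2 ▸ q.2, h1 ▸ p.2⟩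
    exact (hinduceAdj T' p q
      ((hT'adj _ _).2 ⟨Or.inl ⟨hTadj, hnotE⟩, hTadj.ne⟩)).reachable
end

section
/- In a maximally-branching rooted join tree, for every non-root node v_p and every child v_c of v_p, the nodes v_c and v_p share a vertex that does not appear in any strict ancestor of v_p. -/
/-- The underlying tree graph of a parent function: `i` and `j` are adjacent
iff one is the parent of the other. -/
def treeGraph {ι : Type*} (parent : ι → ι) : SimpleGraph ι :=
  SimpleGraph.fromRel (fun i j => parent i = j)

/-- Join-tree property: for every vertex `u` of the hypergraph, the set of
tree nodes whose hyperedge contains `u` is connected in the tree. -/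
def joinTreeProp {V ι : Type*} (N : ι → Set V) (parent : ι → ι) : Prop :=
  ∀ u : V, ((treeGraph parent).induce {i | u ∈ N i}).Preconnected

/-- `a` is a strict ancestor of `p`: some positive iterate of `parent` maps `p` to `a`. -/
def strictAncestor {ι : Type*} (parent : ι → ι) (p a : ι) : Prop :=
  ∃ n, 1 ≤ n ∧ parent^[n] p = a

/-- Maximally branching: no node `c` can be disconnected from its parent and
reconnected to a strict ancestor of its parent while keeping the join-tree property. -/
def maxBranching {V ι : Type*} [DecidableEq ι] (N : ι → Set V) (r : ι)
    (parent : ι → ι) : Prop :=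
  ∀ c a, c ≠ r → strictAncestor parent (parent c) a → a ≠ parent c →
    ¬ joinTreeProp N (Function.update parent c a)

/-!
Suppose every vertex shared by `c` and `p` also occurs in some strict ancestor `a` of `p`. The
nodes containing such a vertex form a connected subtree meeting both the subtree below `p` and
`a`, which lies outside it; the only tree edge leaving the subtree below `p` is `p - parent p`, so
the vertex also occurs in `parent p`. Hence reattaching `c` to `parent p` keeps the join-tree
property, since the lost edge `c - p` is bypassed by `c - parent p - p`, contradicting maximal
branching.
-/

theorem Function.eq_of_isPeriodicPt_of_iterate_eq_fixedPt {α : Type*} {f : α → α} {x r : α}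
    (hr : f r = r) {k : ℕ} (hk : f^[k] x = r) {m : ℕ} (hm : 0 < m)
    (hx : Function.IsPeriodicPt f m x) : x = r := by
  calc x = f^[m * k] x := ((hx.mul_const k).eq).symm
    _ = f^[m * k - k] (f^[k] x) := by
        rw [← Function.iterate_add_apply, Nat.sub_add_cancel (Nat.le_mul_of_pos_left k hm)]
    _ = r := by rw [hk, Function.iterate_fixed hr]

namespace SimpleGraph

lemma Preconnected.of_adj_reachable {α : Type*} {G G' : SimpleGraph α} (hG : G.Preconnected)
    (h : ∀ a b, G.Adj a b → G'.Reachable a b) : G'.Preconnected := by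
  intro a b
  rw [reachable_iff_reflTransGen]
  exact Relation.reflTransGen_closed (fun x y hxy => (reachable_iff_reflTransGen x y).1 (h x y hxy))
    _ _ ((reachable_iff_reflTransGen a b).1 (hG a b))

end SimpleGraph

section JoinTree

variable {ι : Type*}

lemma treeGraph_adj_iff {parent : ι → ι} {x y : ι} :
    (treeGraph parent).Adj x y ↔ x ≠ y ∧ (parent x = y ∨ parent y = x) :=
  SimpleGraph.fromRel_adj _ _ _

lemma induce_treeGraph_adj_of_parent_eq {parent : ι → ι} {S : Set ι} {x y : S}
    (hxy : parent x = y) (hne : (x : ι) ≠ y) : ((treeGraph parent).induce S).Adj x y :=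
  treeGraph_adj_iff.2 ⟨hne, Or.inl hxy⟩

def descendants (parent : ι → ι) (p : ι) : Set ι := {x | ∃ n, parent^[n] x = p}

lemma mem_descendants_self (parent : ι → ι) (p : ι) : p ∈ descendants parent p := ⟨0, rfl⟩

lemma mem_descendants_of_parent_eq {parent : ι → ι} {c p : ι} (hc : parent c = p) :
    c ∈ descendants parent p := ⟨1, hc⟩

lemma not_mem_descendants_of_strictAncestor {parent : ι → ι} {r p a : ι} (hroot : parent r = r)
    (hreach : ∀ i, ∃ n, parent^[n] i = r) (hp : p ≠ r) (ha : strictAncestor parent p a) :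
    a ∉ descendants parent p := by
  rintro ⟨k, hk⟩
  obtain ⟨n, hn, rfl⟩ := ha
  obtain ⟨l, hl⟩ := hreach p
  refine hp (Function.eq_of_isPeriodicPt_of_iterate_eq_fixedPt hroot hl (m := k + n) (by omega) ?_)
  rw [Function.IsPeriodicPt, Function.IsFixedPt, Function.iterate_add_apply, hk]

lemma eq_parent_of_treeGraph_adj {parent : ι → ι} {p x y : ι} (hxy : (treeGraph parent).Adj x y)
    (hx : x ∈ descendants parent p) (hy : y ∉ descendants parent p) : y = parent p := by
  obtain ⟨n, rfl⟩ := hx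
  obtain ⟨-, hxy | hyx⟩ := treeGraph_adj_iff.1 hxy
  · cases n with
    | zero => exact hxy.symm
    | succ n => exact absurd ⟨n, by rw [← hxy, ← Function.iterate_succ_apply]⟩ hy
  · exact absurd ⟨n + 1, by rw [Function.iterate_succ_apply, hyx]⟩ hy

lemma parent_mem_of_preconnected_induce {parent : ι → ι} {S : Set ι} {p x y : ι}
    (hS : ((treeGraph parent).induce S).Preconnected) (hxS : x ∈ S) (hyS : y ∈ S)
    (hx : x ∈ descendants parent p) (hy : y ∉ descendants parent p) : parent p ∈ S := by
  obtain ⟨w⟩ := hS ⟨x, hxS⟩ ⟨y, hyS⟩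
  obtain ⟨d, -, hd₁, hd₂⟩ := w.exists_boundary_dart (Subtype.val ⁻¹' descendants parent p) hx hy
  rw [← eq_parent_of_treeGraph_adj d.adj hd₁ hd₂]
  exact d.snd.2

lemma joinTreeProp_update_of_shared_mem_parent {V : Type*} [DecidableEq ι] {N : ι → Set V}
    {parent : ι → ι} {c p : ι} (hjt : joinTreeProp N parent) (hc : parent c = p)
    (hcp : c ≠ parent p) (hshared : ∀ u ∈ N c, u ∈ N p → u ∈ N (parent p)) :
    joinTreeProp N (Function.update parent c (parent p)) := by
  by_cases hpp : parent p = p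
  · rwa [hpp, ← hc, Function.update_eq_self]
  have hc_ne_p : c ≠ p := by rintro rfl; exact hpp hc
  intro u
  set G := (treeGraph (Function.update parent c (parent p))).induce {i | u ∈ N i}
  have reach_parent : ∀ x y : {i | u ∈ N i}, parent x = y → (x : ι) ≠ y → G.Reachable x y := by
    rintro ⟨x, hx⟩ ⟨y, hy⟩ (hxy : parent x = y) hne
    by_cases hxc : x = c
    · subst hxc
      rw [hc] at hxy
      subst hxy
      have hq : u ∈ N (parent p) := hshared u hx hy
      have hcq : G.Adj ⟨x, hx⟩ ⟨parent p, hq⟩ := induce_treeGraph_adj_of_parent_eq (by simp) hcp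
      have hpq : G.Adj ⟨p, hy⟩ ⟨parent p, hq⟩ :=
        induce_treeGraph_adj_of_parent_eq (Function.update_of_ne hc_ne_p.symm _ _) (Ne.symm hpp)
      exact hcq.reachable.trans hpq.reachable.symm
    · have hxy' : G.Adj ⟨x, hx⟩ ⟨y, hy⟩ :=
        induce_treeGraph_adj_of_parent_eq (by simp [Function.update_of_ne hxc, hxy]) hne
      exact hxy'.reachable
  refine (hjt u).of_adj_reachable fun x y hxy => ?_
  obtain ⟨hne, hxy | hyx⟩ := treeGraph_adj_iff.1 hxy
  · exact reach_parent x y hxy hne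
  · exact (reach_parent y x hyx hne.symm).symm

end JoinTree

theorem maxBranching_parent_child_shared_vertex_general {V ι : Type*} [DecidableEq ι]
    (N : ι → Set V) (r : ι) (parent : ι → ι)
    (hroot : parent r = r) (hreach : ∀ i, ∃ n, parent^[n] i = r)
    (hjt : joinTreeProp N parent) (hmb : maxBranching N r parent)
    (p c : ι) (hp : p ≠ r) (hc : parent c = p) (hcr : c ≠ r) :
    ∃ u : V, u ∈ N c ∧ u ∈ N p ∧ ∀ a, strictAncestor parent p a → u ∉ N a := by
  by_contra! hcon
  have hgp : strictAncestor parent p (parent p) := ⟨1, le_rfl, rfl⟩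
  have hgp_not_desc := not_mem_descendants_of_strictAncestor hroot hreach hp hgp
  have hshared : ∀ u ∈ N c, u ∈ N p → u ∈ N (parent p) := by
    intro u huc hup
    obtain ⟨a, ha, hua⟩ := hcon u huc hup
    exact parent_mem_of_preconnected_induce (hjt u) hup hua (mem_descendants_self parent p)
      (not_mem_descendants_of_strictAncestor hroot hreach hp ha)
  refine hmb c (parent p) hcr (hc ▸ hgp) ?_ ?_
  · rw [hc]
    exact fun h => hgp_not_desc (by rw [h]; exact mem_descendants_self parent p)
  · exact joinTreeProp_update_of_shared_mem_parent hjt hc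
      (fun h => hgp_not_desc (h ▸ mem_descendants_of_parent_eq hc)) hshared

/-- In a maximally-branching rooted join tree, every non-root node `p`
and child `c` of `p` share a vertex not appearing in any strict ancestor of `p`. -/
theorem maxBranching_parent_child_shared_vertex {V ι : Type*} [Fintype ι] [DecidableEq ι]
    (N : ι → Set V) (r : ι) (parent : ι → ι)
    (hroot : parent r = r) (hreach : ∀ i, ∃ n, parent^[n] i = r)
    (hjt : joinTreeProp N parent) (hmb : maxBranching N r parent)
    (p c : ι) (hp : p ≠ r) (hc : parent c = p) (hcr : c ≠ r) :
    ∃ u : V, u ∈ N c ∧ u ∈ N p ∧ ∀ a, strictAncestor parent p a → u ∉ N a :=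
  maxBranching_parent_child_shared_vertex_general N r parent hroot hreach hjt hmb p c hp hc hcr
end

section
/- In a maximally-branching rooted join tree, if v_a is a non-root node and v_d is a descendant of v_a, and x_a, x_d are vertices contained in nodes v_a and v_d respectively, then there is a path in the hypergraph from x_a to x_d such that no intermediate vertex of the path appears in any strict ancestor of v_a. -/
/-!
In a maximally branching join tree, every node `c` strictly below `va` shares with its parent a
vertex that occurs in no strict ancestor of `va`. Otherwise each vertex shared by `c` and its parent
also occurs in a strict ancestor of `va`, hence, its occurrences forming a subtree, in every node on
the path from `c` up to `parent va`; re-hanging `c` below `parent va` would then preserve the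
join-tree property. Chaining these shared vertices along the tree path from `vd` up to `va` gives
the required path.
-/

section TreeGraph

variable {ι : Type*} {P : ι → ι} {S : Set ι}

lemma treeGraph_adj {x y : ι} : (treeGraph P).Adj x y ↔ x ≠ y ∧ (P x = y ∨ P y = x) :=
  SimpleGraph.fromRel_adj ..

lemma treeGraph_induce_reachable_of_eq {x y : ι} (hx : x ∈ S) (hy : y ∈ S) (hxy : P x = y) :
    ((treeGraph P).induce S).Reachable ⟨x, hx⟩ ⟨y, hy⟩ := by
  by_cases h : x = y
  · subst h; rfl
  · exact SimpleGraph.Adj.reachable (show (treeGraph P).Adj x y from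
      treeGraph_adj.mpr ⟨h, .inl hxy⟩)

lemma treeGraph_induce_reachable_iterate {x : ι} :
    ∀ m, (∀ j ≤ m, P^[j] x ∈ S) → ∀ (hx : x ∈ S) {y : ι} (hy : y ∈ S), P^[m] x = y →
      ((treeGraph P).induce S).Reachable ⟨x, hx⟩ ⟨y, hy⟩
  | 0, _, _, _, _, rfl => .rfl
  | m + 1, hS, hx, _, hy, rfl =>
    (treeGraph_induce_reachable_iterate m (fun j hj => hS j (by omega)) hx (hS m m.le_succ)
      rfl).trans (treeGraph_induce_reachable_of_eq _ _ (Function.iterate_succ_apply' P m x).symm)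

lemma mem_of_treeGraph_induce_reachable {p : ι} {x y : S}
    (hxy : ((treeGraph P).induce S).Reachable x y) (hx : ∃ k, P^[k] x = p)
    (hy : ¬ ∃ k, P^[k] y = p) : p ∈ S := by
  obtain ⟨w⟩ := hxy
  induction w with
  | nil => exact absurd hx hy
  | @cons x z y hxz _ ih =>
    by_cases hxp : (x : ι) = p
    · exact hxp ▸ x.2
    refine ih ?_ hy
    obtain ⟨k, hk⟩ := hx
    rcases (treeGraph_adj.mp (show (treeGraph P).Adj x z from hxz)).2 with h | h
    · cases k with
      | zero => exact absurd hk hxp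
      | succ k => exact ⟨k, by rwa [← h, ← Function.iterate_succ_apply]⟩
    · exact ⟨k + 1, by rw [Function.iterate_succ_apply, h, hk]⟩

end TreeGraph

lemma Function.iterate_update_of_forall_ne {α : Type*} [DecidableEq α] {f : α → α} {c a x : α}
    (hx : ∀ j, f^[j] x ≠ c) : ∀ m, (Function.update f c a)^[m] x = f^[m] x
  | 0 => rfl
  | m + 1 => by
    rw [Function.iterate_succ_apply', Function.iterate_update_of_forall_ne hx m,
      Function.update_of_ne (hx m), Function.iterate_succ_apply']

section RootedTree

variable {ι : Type*} {parent : ι → ι} {r : ι}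

lemma eq_root_of_iterate_eq_self (hroot : parent r = r) (hreach : ∀ i, ∃ n, parent^[n] i = r)
    {i : ι} {k : ℕ} (hk : 1 ≤ k) (hi : parent^[k] i = i) : i = r := by
  obtain ⟨m, hm⟩ := hreach i
  calc i = parent^[k * m] i := (Function.IsPeriodicPt.mul_const hi m).symm
    _ = parent^[k * m - m] (parent^[m] i) := by
        rw [← Function.iterate_add_apply, Nat.sub_add_cancel (Nat.le_mul_of_pos_left m hk)]
    _ = r := by rw [hm, Function.iterate_fixed hroot]

lemma eq_of_iterate_eq_of_iterate_eq (hroot : parent r = r)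
    (hreach : ∀ i, ∃ n, parent^[n] i = r) {x y : ι} {a b : ℕ}
    (hxy : parent^[a] x = y) (hyx : parent^[b] y = x) : x = y := by
  rcases Nat.eq_zero_or_pos (b + a) with h | h
  · obtain rfl : a = 0 := by omega
    exact hxy
  · have hx := eq_root_of_iterate_eq_self hroot hreach h
      (by rw [Function.iterate_add_apply, hxy, hyx])
    rw [← hxy, hx, Function.iterate_fixed hroot]

variable {V : Type*} {N : ι → Set V}

lemma mem_iterate_of_mem_of_mem_iterate (hroot : parent r = r)
    (hreach : ∀ i, ∃ n, parent^[n] i = r) (hjt : joinTreeProp N parent) {u : V} {c : ι}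
    {m : ℕ} (hc : u ∈ N c) (hm : u ∈ N (parent^[m] c)) {j : ℕ} (hj : j ≤ m) :
    u ∈ N (parent^[j] c) := by
  by_cases hdesc : ∃ k, parent^[k] (parent^[m] c) = parent^[j] c
  · obtain ⟨k, hk⟩ := hdesc
    have hjm : parent^[m - j] (parent^[j] c) = parent^[m] c := by
      rw [← Function.iterate_add_apply, Nat.sub_add_cancel hj]
    rwa [eq_of_iterate_eq_of_iterate_eq hroot hreach hjm hk]
  · exact mem_of_treeGraph_induce_reachable (S := {i | u ∈ N i}) (x := ⟨c, hc⟩)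
      (y := ⟨_, hm⟩) (hjt u _ _) ⟨j, rfl⟩ hdesc

end RootedTree

lemma SimpleGraph.Preconnected.of_adj_reachable_s3 {α : Type*} {G H : SimpleGraph α}
    (hG : G.Preconnected) (h : ∀ a b, G.Adj a b → H.Reachable a b) : H.Preconnected :=
  fun x y => (H.reachable_iff_reflTransGen x y).mpr <|
    Relation.ReflTransGen.lift' id
      (fun a b hab => (H.reachable_iff_reflTransGen a b).mp (h a b hab)) x y ((G.reachable_iff_reflTransGen x y).mp (hG x y))

section Rehang

variable {V ι : Type*} [DecidableEq ι] {N : ι → Set V} {parent : ι → ι}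

lemma joinTreeProp_update_iterate (hjt : joinTreeProp N parent) {c : ι} {m : ℕ}
    (hc : ∀ j, parent^[j] (parent c) ≠ c)
    (hpath : ∀ u ∈ N c, u ∈ N (parent c) → ∀ j ≤ m, u ∈ N (parent^[j] (parent c))) :
    joinTreeProp N (Function.update parent c (parent^[m] (parent c))) := by
  set P := Function.update parent c (parent^[m] (parent c))
  intro u
  have hedge : ∀ x (hx : u ∈ N x) (hpx : u ∈ N (parent x)),
      ((treeGraph P).induce {i | u ∈ N i}).Reachable ⟨x, hx⟩ ⟨parent x, hpx⟩ := by
    intro x hx hpx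
    by_cases hxc : x = c
    · subst hxc
      have hS : ∀ j ≤ m, P^[j] (parent x) ∈ {i | u ∈ N i} := fun j hj => by
        rw [Set.mem_ofPred_eq, Function.iterate_update_of_forall_ne hc]
        exact hpath u hx hpx j hj
      exact (treeGraph_induce_reachable_of_eq (P := P) hx (hpath u hx hpx m le_rfl)
        (Function.update_self ..)).trans (treeGraph_induce_reachable_iterate (P := P) m hS hpx _
          (Function.iterate_update_of_forall_ne hc m)).symm
    · exact treeGraph_induce_reachable_of_eq (P := P) hx hpx (Function.update_of_ne hxc ..)
  refine (hjt u).of_adj_reachable_s3 fun ⟨x, hx⟩ ⟨y, hy⟩ hxy => ?_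
  rcases (treeGraph_adj.mp hxy).2 with rfl | rfl
  · exact hedge x hx hy
  · exact (hedge y hy hx).symm

end Rehang

lemma exists_mem_inter_parent_not_mem_strictAncestor {V ι : Type*} [DecidableEq ι]
    {N : ι → Set V} {r : ι} {parent : ι → ι} (hroot : parent r = r)
    (hreach : ∀ i, ∃ n, parent^[n] i = r)
    (hjt : joinTreeProp N parent) (hmb : maxBranching N r parent) {va : ι} (hva : va ≠ r)
    {c : ι} {k : ℕ} (hck : parent^[k] (parent c) = va) :
    ∃ u ∈ N c, u ∈ N (parent c) ∧ ∀ a, strictAncestor parent va a → u ∉ N a := by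
  by_contra! hcon
  have hcr : c ≠ r := fun h => hva (by rw [← hck, h, hroot, Function.iterate_fixed hroot])
  have hcyc : ∀ j, parent^[j] (parent c) ≠ c := fun j h =>
    hcr (eq_root_of_iterate_eq_self hroot hreach (k := j + 1) (by omega)
      (by rwa [Function.iterate_succ_apply]))
  have hpar : parent^[k + 1] (parent c) = parent va := by rw [Function.iterate_succ_apply', hck]
  have hne : parent va ≠ parent c := fun h => hva <|
    eq_root_of_iterate_eq_self hroot hreach (k := k + 1) (by omega)
      (by rw [Function.iterate_succ_apply, h, hck])
  refine hmb c (parent va) hcr ⟨k + 1, by omega, hpar⟩ hne ?_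
  rw [← hpar]
  refine joinTreeProp_update_iterate hjt hcyc fun u hc hpc j hj => ?_
  obtain ⟨_, ⟨s, hs, rfl⟩, hua⟩ := hcon u hc hpc
  exact mem_iterate_of_mem_of_mem_iterate hroot hreach hjt hpc (m := s + k)
    (by rwa [Function.iterate_add_apply, hck]) (by omega)

lemma exists_isChain_of_forall_exists_mem_inter_parent {V ι : Type*} {N : ι → Set V}
    {parent : ι → ι} {T : Set V} {va : ι} {xa : V} (hxa : xa ∈ N va)
    (hshare : ∀ c k, parent^[k] (parent c) = va → ∃ u ∈ N c, u ∈ N (parent c) ∧ u ∈ T) :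
    ∀ n vd, parent^[n] vd = va → ∀ xd ∈ N vd, ∃ L : List V, (∀ u ∈ L, u ∈ T) ∧
      List.IsChain (fun u w => ∃ i, u ∈ N i ∧ w ∈ N i) (xa :: L ++ [xd])
  | 0, _, rfl, xd, hxd => ⟨[], by simp, .cons_cons ⟨_, hxa, hxd⟩ (.singleton xd)⟩
  | n + 1, vd, hn, xd, hxd => by
    obtain ⟨u, hu, hpu, huT⟩ := hshare vd n hn
    obtain ⟨L, hLT, hL⟩ := exists_isChain_of_forall_exists_mem_inter_parent hxa hshare n
      (parent vd) hn u hpu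
    refine ⟨L ++ [u], ?_, ?_⟩
    · simpa [or_imp, forall_and] using And.intro hLT huT
    · have hchain := hL.append (.singleton xd) fun x hx y hy => by
        rw [List.getLast?_concat, Option.mem_some_iff] at hx
        rw [List.head?_cons, Option.mem_some_iff] at hy
        exact hx ▸ hy ▸ ⟨vd, hu, hxd⟩
      simpa using hchain

lemma List.mem_of_getElem?_cons_append_singleton {α : Type*} {a b u : α} {L : List α} {n : ℕ}
    (h1 : 1 ≤ n) (h2 : n + 1 < (a :: L ++ [b]).length) (h : (a :: L ++ [b])[n]? = some u) :
    u ∈ L := by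
  obtain ⟨m, rfl⟩ : ∃ m, n = m + 1 := ⟨n - 1, by omega⟩
  simp only [List.length_append, List.length_cons, List.length_nil] at h2
  rw [List.cons_append, List.getElem?_cons_succ, List.getElem?_append_left (by omega)] at h
  exact List.mem_of_getElem? h

theorem maxBranching_descendant_path_general {V ι : Type*} [DecidableEq ι]
    (N : ι → Set V) (r : ι) (parent : ι → ι)
    (hroot : parent r = r) (hreach : ∀ i, ∃ n, parent^[n] i = r)
    (hjt : joinTreeProp N parent) (hmb : maxBranching N r parent)
    (va vd : ι) (hva : va ≠ r) (hdesc : ∃ n, parent^[n] vd = va)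
    (xa xd : V) (hxa : xa ∈ N va) (hxd : xd ∈ N vd) :
    ∃ q : List V, q.head? = some xa ∧ q.getLast? = some xd ∧
      List.Chain' (fun u w => ∃ i, u ∈ N i ∧ w ∈ N i) q ∧
      (∀ n : ℕ, ∀ u : V, 1 ≤ n → n + 1 < q.length → q[n]? = some u →
        ∀ a, strictAncestor parent va a → u ∉ N a) := by
  obtain ⟨n, hn⟩ := hdesc
  obtain ⟨L, hLT, hchain⟩ := exists_isChain_of_forall_exists_mem_inter_parent
    (T := {u | ∀ a, strictAncestor parent va a → u ∉ N a}) hxa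
    (fun _ _ hck => exists_mem_inter_parent_not_mem_strictAncestor hroot hreach hjt hmb hva hck)
    n vd hn xd hxd
  exact ⟨xa :: L ++ [xd], rfl, List.getLast?_concat, hchain,
    fun _ u h1 h2 hu => hLT u (List.mem_of_getElem?_cons_append_singleton h1 h2 hu)⟩

/-- In a maximally-branching rooted join tree, for a non-root node `va`,
a descendant `vd` of `va`, and vertices `xa ∈ N va`, `xd ∈ N vd`, there is a path in
the hypergraph from `xa` to `xd` whose intermediate vertices avoid all strict
ancestors of `va`. -/
theorem maxBranching_descendant_path {V ι : Type*} [Fintype ι] [DecidableEq ι]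
    (N : ι → Set V) (r : ι) (parent : ι → ι)
    (hroot : parent r = r) (hreach : ∀ i, ∃ n, parent^[n] i = r)
    (hjt : joinTreeProp N parent) (hmb : maxBranching N r parent)
    (va vd : ι) (hva : va ≠ r) (hdesc : ∃ n, parent^[n] vd = va)
    (xa xd : V) (hxa : xa ∈ N va) (hxd : xd ∈ N vd) :
    ∃ q : List V, q.head? = some xa ∧ q.getLast? = some xd ∧
      List.Chain' (fun u w => ∃ i, u ∈ N i ∧ w ∈ N i) q ∧
      (∀ n : ℕ, ∀ u : V, 1 ≤ n → n + 1 < q.length → q[n]? = some u →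
        ∀ a, strictAncestor parent va a → u ∉ N a) :=
  maxBranching_descendant_path_general N r parent hroot hreach hjt hmb va vd hva hdesc xa xd hxa hxd
end

section
/- Every rooted join tree admits a rearrangement (a join tree with the same set of nodes, possibly different edges) with the same root that is maximally branching. -/
/-!
Reattaching a non-root node `c` from its parent to a strict ancestor of that parent leaves every
node connected to the root, makes no depth grow and makes the depth of `c` drop, so the total
depth `∑ i, depth parent r i` drops strictly. A rooted join tree fails to be maximally branching
exactly when some such move yields a join tree again; performing moves while possible therefore
terminates, and it stops at a maximally branching rearrangement.
-/

theorem Function.iterate_eq_of_map_lt {α : Type*} {f : α → α} {x : α} (μ : α → ℕ)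
    (hx : f x = x) (hμ : ∀ y ≠ x, μ (f y) < μ y) (y : α) : f^[μ y] y = x := by
  induction hn : μ y using Nat.strong_induction_on generalizing y with
  | _ n ih =>
  by_cases hy : y = x
  · subst hy
    exact Function.iterate_fixed hx n
  · obtain ⟨k, rfl⟩ := Nat.exists_eq_add_of_lt (hn ▸ hμ y hy)
    rw [show μ (f y) + k + 1 = (k + μ (f y)) + 1 by omega, Function.iterate_succ_apply,
      Function.iterate_add_apply, ih _ (by omega) (f y) rfl, Function.iterate_fixed hx]

section depth

variable {ι : Type*} {p : ι → ι} {r i : ι}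

/-- Junk value `0` (`sInf ∅`) when `r` is never reached from `i`. -/
noncomputable def depth (p : ι → ι) (r i : ι) : ℕ :=
  sInf {n | p^[n] i = r}

theorem iterate_depth (h : ∃ n, p^[n] i = r) : p^[depth p r i] i = r :=
  Nat.sInf_mem h

theorem depth_le {n : ℕ} (h : p^[n] i = r) : depth p r i ≤ n :=
  Nat.sInf_le h

theorem depth_apply_lt (h : ∃ n, p^[n] i = r) (hi : i ≠ r) : depth p r (p i) < depth p r i := by
  obtain ⟨m, hm⟩ : ∃ m, depth p r i = m + 1 :=
    Nat.exists_eq_succ_of_ne_zero fun h0 => hi (by simpa [h0] using iterate_depth h)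
  have hpi : p^[m] (p i) = r := by
    simpa only [hm, Function.iterate_succ_apply] using iterate_depth h
  exact hm ▸ Nat.lt_succ_of_le (depth_le hpi)

variable (hroot : p r = r) (hreach : ∀ i, ∃ n, p^[n] i = r)
include hroot hreach

theorem depth_apply_le (i : ι) : depth p r (p i) ≤ depth p r i := by
  by_cases hi : i = r
  · rw [hi, hroot]
  · exact (depth_apply_lt (hreach i) hi).le

theorem depth_iterate_le (n : ℕ) (i : ι) : depth p r (p^[n] i) ≤ depth p r i := by
  induction n with
  | zero => rfl
  | succ n ih =>
    rw [Function.iterate_succ_apply']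
    exact (depth_apply_le hroot hreach _).trans ih

theorem depth_lt_of_strictAncestor {j a : ι} (h : strictAncestor p j a) (hne : a ≠ j) :
    depth p r a < depth p r j := by
  obtain ⟨k, hk, rfl⟩ := h
  obtain ⟨m, rfl⟩ := Nat.exists_eq_add_of_le' hk
  have hj : j ≠ r := by
    rintro rfl
    exact hne (Function.iterate_fixed hroot _)
  rw [Function.iterate_succ_apply]
  exact (depth_iterate_le hroot hreach m _).trans_lt (depth_apply_lt (hreach j) hj)

end depth

section reattach

variable {ι : Type*} [DecidableEq ι] {p : ι → ι} {r c a : ι}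
  (hroot : p r = r) (hreach : ∀ i, ∃ n, p^[n] i = r) (hc : c ≠ r)
  (ha : depth p r a + 1 < depth p r c)
include hroot hreach hc ha

theorem iterate_update_depth (i : ι) : (Function.update p c a)^[depth p r i] i = r := by
  refine Function.iterate_eq_of_map_lt _ (by rwa [Function.update_of_ne hc.symm]) (fun j hj => ?_) i
  by_cases hjc : j = c
  · subst hjc
    rw [Function.update_self]
    omega
  · rw [Function.update_of_ne hjc]
    exact depth_apply_lt (hreach j) hj

theorem sum_depth_update_lt [Fintype ι] :
    ∑ i, depth (Function.update p c a) r i < ∑ i, depth p r i := by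
  have hle i : depth (Function.update p c a) r i ≤ depth p r i :=
    depth_le (iterate_update_depth hroot hreach hc ha i)
  have hc_lt : depth (Function.update p c a) r c < depth p r c := by
    have hpath : (Function.update p c a)^[depth p r a + 1] c = r := by
      rw [Function.iterate_succ_apply, Function.update_self,
        iterate_update_depth hroot hreach hc ha]
    exact (depth_le hpath).trans_lt ha
  exact Finset.sum_lt_sum (fun i _ => hle i) ⟨c, Finset.mem_univ c, hc_lt⟩

end reattach

theorem exists_lt_sum_depth_of_not_maxBranching {V ι : Type*} [Fintype ι] [DecidableEq ι]
    {N : ι → Set V} {r : ι} {p : ι → ι} (hroot : p r = r)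
    (hreach : ∀ i, ∃ n, p^[n] i = r) (h : ¬ maxBranching N r p) :
    ∃ q : ι → ι, q r = r ∧ (∀ i, ∃ n, q^[n] i = r) ∧ joinTreeProp N q ∧
      ∑ i, depth q r i < ∑ i, depth p r i := by
  simp only [maxBranching, not_forall, not_not] at h
  obtain ⟨c, a, hc, hanc, hne, hjt⟩ := h
  have ha : depth p r a + 1 < depth p r c := by
    have := depth_lt_of_strictAncestor hroot hreach hanc hne
    have := depth_apply_lt (hreach c) hc
    omega
  exact ⟨_, by rwa [Function.update_of_ne hc.symm],
    fun i => ⟨_, iterate_update_depth hroot hreach hc ha i⟩, hjt,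
    sum_depth_update_lt hroot hreach hc ha⟩

/-- Every rooted join tree admits a rearrangement (same nodes,
same root) that is a maximally-branching join tree. -/
theorem exists_maxBranching_rearrangement {V ι : Type*} [Fintype ι] [DecidableEq ι]
    (N : ι → Set V) (r : ι) (parent : ι → ι)
    (hroot : parent r = r) (hreach : ∀ i, ∃ n, parent^[n] i = r)
    (hjt : joinTreeProp N parent) :
    ∃ parent' : ι → ι, parent' r = r ∧ (∀ i, ∃ n, parent'^[n] i = r) ∧
      joinTreeProp N parent' ∧ maxBranching N r parent' := by
  induction hs : ∑ i, depth parent r i using Nat.strong_induction_on generalizing parent with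
  | _ s ih =>
  by_cases hmb : maxBranching N r parent
  · exact ⟨parent, hroot, hreach, hjt, hmb⟩
  · obtain ⟨q, hqroot, hqreach, hqjt, hlt⟩ :=
      exists_lt_sum_depth_of_not_maxBranching hroot hreach hmb
    exact ih _ (hs ▸ hlt) q hqroot hqreach hqjt rfl
end

section
/- Let (A, ⊕, ⊗, 0̄, 1̄) be a commutative semiring and let T be a finite rooted tree where each node u carries a finite multiset (list) of pairs: each pair consists of a value val ∈ A. Define for each element t at node u the aggregate agg(t) recursively: agg(t) = val(t) ⊗ ⨂_{c child of u} (⨁_{t' at c compatible with t} agg(t')). Then agg(t) equals ⨁ over all 'partial answers' p rooted at t (choices of one compatible element per node in the subtree of u, consistent along edges) of ⨂_{t' ∈ p} val(t'). (Distributivity of ⊗ over ⊕ implies the bottom-up message-passing computation is correct.) -/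
/-!
Induction on the size of the subtree of `u`. The subtree of `u` is `u` together with the
pairwise disjoint subtrees of its children, so a partial answer rooted at `t` is the same as a
family, indexed by the children `c`, of partial answers of `c` rooted at tuples compatible with
`t`. Its value is `val t` times the product of the values of the family, and distributivity
(`Finset.prod_sum`) turns the sum over such families into the product over the children of the
sums over each child, which are the aggregates by induction.
-/

open Finset Function

theorem Function.IsPeriodicPt.eq_of_iterate_eq_isFixedPt {α : Type*} {f : α → α} {x r : α}
    {m n : ℕ} (hx : IsPeriodicPt f n x) (hn : 0 < n) (hr : IsFixedPt f r) (hm : f^[m] x = r) :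
    x = r :=
  calc x = f^[n * m] x := (hx.mul_const m).eq.symm
    _ = f^[n * m - m] (f^[m] x) := by
      rw [← iterate_add_apply, Nat.sub_add_cancel (Nat.le_mul_of_pos_left m hn)]
    _ = r := by rw [hm, iterate_fixed hr]

/-- `e` pads a function on a block `F c` outside that block, `p₀` fixes a glued function outside
all blocks. -/
theorem prod_sum_eq_sum_glued {κ ι τ R : Type*} [CommSemiring R] [DecidableEq ι]
    (C : Finset κ) (F : κ → Finset ι) (hF : (C : Set κ).PairwiseDisjoint F) (e p₀ : ι → τ)
    (T : κ → Finset (ι → τ)) (hT : ∀ c ∈ C, ∀ q ∈ T c, ∀ i ∉ F c, q i = e i)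
    (G : Finset (ι → τ))
    (hG : ∀ p, p ∈ G ↔ (∀ c ∈ C, (F c).piecewise p e ∈ T c) ∧ ∀ i ∉ C.biUnion F, p i = p₀ i)
    (f : ι → τ → R) :
    ∏ c ∈ C, ∑ q ∈ T c, ∏ i ∈ F c, f i (q i) = ∑ p ∈ G, ∏ i ∈ C.biUnion F, f i (p i) := by
  classical
  let glue (g : ∀ c ∈ C, ι → τ) (i : ι) : τ :=
    if h : ∃ c ∈ C, i ∈ F c then g h.choose h.choose_spec.1 i else p₀ i
  have glue_of_mem (g : ∀ c ∈ C, ι → τ) {c} (hc : c ∈ C) {i} (hi : i ∈ F c) :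
      glue g i = g c hc i := by
    have h : ∃ c ∈ C, i ∈ F c := ⟨c, hc, hi⟩
    obtain rfl : h.choose = c :=
      hF.elim h.choose_spec.1 hc (not_disjoint_iff.2 ⟨i, h.choose_spec.2, hi⟩)
    simp only [glue, dif_pos h]
  have glue_of_notMem (g : ∀ c ∈ C, ι → τ) {i} (hi : i ∉ C.biUnion F) : glue g i = p₀ i := by
    simp only [mem_biUnion] at hi
    simp only [glue, dif_neg hi]
  have piecewise_glue {g : ∀ c ∈ C, ι → τ} (hg : g ∈ C.pi T) {c} (hc : c ∈ C) :
      (F c).piecewise (glue g) e = g c hc := by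
    funext i
    by_cases hi : i ∈ F c
    · rw [piecewise_eq_of_mem _ _ _ hi, glue_of_mem g hc hi]
    · rw [piecewise_eq_of_notMem _ _ _ hi, hT c hc _ (mem_pi.1 hg c hc) i hi]
  rw [prod_sum]
  refine sum_bij' (fun g _ => glue g) (fun p _ c _ => (F c).piecewise p e) ?_ ?_ ?_ ?_ ?_
  · intro g hg
    refine (hG _).2 ⟨fun c hc => ?_, fun i hi => glue_of_notMem g hi⟩
    rw [piecewise_glue hg hc]
    exact mem_pi.1 hg c hc
  · intro p hp
    exact mem_pi.2 ((hG p).1 hp).1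
  · intro g hg
    funext c hc
    exact piecewise_glue hg hc
  · intro p hp
    funext i
    by_cases hi : i ∈ C.biUnion F
    · obtain ⟨c, hc, hic⟩ := mem_biUnion.1 hi
      exact (glue_of_mem (fun c _ => (F c).piecewise p e) hc hic).trans
        (piecewise_eq_of_mem _ _ _ hic)
    · exact (glue_of_notMem (fun c _ => (F c).piecewise p e) hi).trans
        (((hG p).1 hp).2 i hi).symm
  · intro g hg
    rw [prod_biUnion hF, ← prod_attach C]
    refine prod_congr rfl fun c _ => prod_congr rfl fun i hi => ?_
    rw [glue_of_mem g c.2 hi]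

section Subtrees

variable {ι : Type*} {parent : ι → ι} {subtree children : ι → Finset ι}

theorem mem_subtree_self (hsubtree : ∀ u i, i ∈ subtree u ↔ ∃ n, parent^[n] i = u) (u : ι) :
    u ∈ subtree u :=
  (hsubtree u u).2 ⟨0, rfl⟩

theorem parent_mem_subtree (hsubtree : ∀ u i, i ∈ subtree u ↔ ∃ n, parent^[n] i = u) {c i : ι}
    (hi : i ∈ subtree c) (hne : i ≠ c) : parent i ∈ subtree c := by
  obtain ⟨_ | n, hn⟩ := (hsubtree c i).1 hi
  · exact absurd hn hne
  · exact (hsubtree c _).2 ⟨n, by rwa [iterate_succ_apply] at hn⟩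

theorem subtree_eq_insert_biUnion [DecidableEq ι]
    (hsubtree : ∀ u i, i ∈ subtree u ↔ ∃ n, parent^[n] i = u)
    (hchildren : ∀ u i, i ∈ children u ↔ (parent i = u ∧ i ≠ u)) (u : ι) :
    subtree u = insert u ((children u).biUnion subtree) := by
  ext i
  simp only [mem_insert, mem_biUnion]
  constructor
  · rw [hsubtree]
    rintro ⟨n, hn⟩
    induction n with
    | zero => exact Or.inl hn
    | succ n ih =>
      rw [iterate_succ_apply'] at hn
      by_cases hc : parent^[n] i = u
      · exact ih hc
      · exact Or.inr ⟨_, (hchildren u _).2 ⟨hn, hc⟩, (hsubtree _ i).2 ⟨n, rfl⟩⟩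
  · rintro (rfl | ⟨c, hc, hi⟩)
    · exact mem_subtree_self hsubtree i
    · obtain ⟨n, hn⟩ := (hsubtree c i).1 hi
      exact (hsubtree u i).2 ⟨n + 1, by rw [iterate_succ_apply', hn, ((hchildren u c).1 hc).1]⟩

theorem subtree_subset_of_mem_children [DecidableEq ι]
    (hsubtree : ∀ u i, i ∈ subtree u ↔ ∃ n, parent^[n] i = u)
    (hchildren : ∀ u i, i ∈ children u ↔ (parent i = u ∧ i ≠ u)) {u c : ι}
    (hc : c ∈ children u) : subtree c ⊆ subtree u := by
  rw [subtree_eq_insert_biUnion hsubtree hchildren u]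
  exact (subset_biUnion_of_mem subtree hc).trans (subset_insert _ _)

theorem notMem_subtree_of_mem_children
    (hsubtree : ∀ u i, i ∈ subtree u ↔ ∃ n, parent^[n] i = u)
    (hchildren : ∀ u i, i ∈ children u ↔ (parent i = u ∧ i ≠ u))
    (hper : ∀ n i, 0 < n → IsPeriodicPt parent n i → IsFixedPt parent i) {u c : ι}
    (hc : c ∈ children u) : u ∉ subtree c := by
  obtain ⟨hcu, hne⟩ := (hchildren u c).1 hc
  rintro hu
  obtain ⟨n, hn⟩ := (hsubtree c u).1 hu
  have hfix : IsFixedPt parent c :=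
    hper (n + 1) c n.succ_pos (by rw [IsPeriodicPt, IsFixedPt, iterate_succ_apply, hcu, hn])
  exact hne (hfix.eq.symm.trans hcu)

theorem pairwiseDisjoint_subtree_children
    (hsubtree : ∀ u i, i ∈ subtree u ↔ ∃ n, parent^[n] i = u)
    (hchildren : ∀ u i, i ∈ children u ↔ (parent i = u ∧ i ≠ u))
    (hper : ∀ n i, 0 < n → IsPeriodicPt parent n i → IsFixedPt parent i) (u : ι) :
    (children u : Set ι).PairwiseDisjoint subtree := by
  intro c₁ hc₁ c₂ hc₂ hne
  refine disjoint_left.2 fun i hi₁ hi₂ => hne ?_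
  obtain ⟨n₁, hn₁⟩ := (hsubtree c₁ i).1 hi₁
  obtain ⟨n₂, hn₂⟩ := (hsubtree c₂ i).1 hi₂
  wlog hle : n₁ ≤ n₂ generalizing c₁ c₂ n₁ n₂
  · exact (this hc₂ hc₁ (Ne.symm hne) hi₂ hi₁ n₂ hn₂ n₁ hn₁ (le_of_not_ge hle)).symm
  obtain ⟨k, rfl⟩ := Nat.exists_eq_add_of_le hle
  rw [add_comm, iterate_add_apply, hn₁] at hn₂
  cases k with
  | zero => exact hn₂
  | succ k =>
    rw [iterate_succ_apply, ((hchildren u c₁).1 hc₁).1] at hn₂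
    exact absurd ((hsubtree c₂ u).2 ⟨k, hn₂⟩)
      (notMem_subtree_of_mem_children hsubtree hchildren hper hc₂)

theorem card_subtree_lt_of_mem_children [DecidableEq ι]
    (hsubtree : ∀ u i, i ∈ subtree u ↔ ∃ n, parent^[n] i = u)
    (hchildren : ∀ u i, i ∈ children u ↔ (parent i = u ∧ i ≠ u))
    (hper : ∀ n i, 0 < n → IsPeriodicPt parent n i → IsFixedPt parent i) {u c : ι}
    (hc : c ∈ children u) : (subtree c).card < (subtree u).card :=
  card_lt_card ⟨subtree_subset_of_mem_children hsubtree hchildren hc, fun h =>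
    notMem_subtree_of_mem_children hsubtree hchildren hper hc (h (mem_subtree_self hsubtree u))⟩

theorem notMem_biUnion_subtree_children [DecidableEq ι]
    (hsubtree : ∀ u i, i ∈ subtree u ↔ ∃ n, parent^[n] i = u)
    (hchildren : ∀ u i, i ∈ children u ↔ (parent i = u ∧ i ≠ u))
    (hper : ∀ n i, 0 < n → IsPeriodicPt parent n i → IsFixedPt parent i) (u : ι) :
    u ∉ (children u).biUnion subtree := by
  simp only [mem_biUnion, not_exists, not_and]
  exact fun c hc => notMem_subtree_of_mem_children hsubtree hchildren hper hc

end Subtrees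

section PartialAnswers

variable {ι τ : Type*} {parent : ι → ι} {subtree children : ι → Finset ι} {tup : ι → Finset τ}
  {compat : τ → τ → Prop} {d : τ}

variable (parent subtree tup compat d) in
def IsPartialAnswer (u : ι) (t : τ) (p : ι → τ) : Prop :=
  p u = t ∧ (∀ i ∈ subtree u, p i ∈ tup i) ∧
    (∀ i ∈ subtree u, i ≠ u → compat (p (parent i)) (p i)) ∧ ∀ i, i ∉ subtree u → p i = d

theorem IsPartialAnswer.piecewise_of_mem_children [DecidableEq ι]
    (hsubtree : ∀ u i, i ∈ subtree u ↔ ∃ n, parent^[n] i = u)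
    (hchildren : ∀ u i, i ∈ children u ↔ (parent i = u ∧ i ≠ u))
    (hper : ∀ n i, 0 < n → IsPeriodicPt parent n i → IsFixedPt parent i) {u c : ι} {t : τ}
    {p : ι → τ} (hp : IsPartialAnswer parent subtree tup compat d u t p) (hc : c ∈ children u) :
    compat t (p c) ∧
      IsPartialAnswer parent subtree tup compat d c (p c)
        ((subtree c).piecewise p fun _ => d) := by
  obtain ⟨hpu, hptup, hpcompat, -⟩ := hp
  obtain ⟨hcu, hcne⟩ := (hchildren u c).1 hc
  have hsub := subtree_subset_of_mem_children hsubtree hchildren hc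
  have hcc := mem_subtree_self hsubtree c
  refine ⟨?_, piecewise_eq_of_mem _ _ _ hcc, fun i hi => ?_, fun i hi hne => ?_,
    fun i hi => piecewise_eq_of_notMem _ _ _ hi⟩
  · simpa only [hcu, hpu] using hpcompat c (hsub hcc) hcne
  · rw [piecewise_eq_of_mem _ _ _ hi]
    exact hptup i (hsub hi)
  · have hiu : i ≠ u := by
      rintro rfl
      exact notMem_subtree_of_mem_children hsubtree hchildren hper hc hi
    rw [piecewise_eq_of_mem _ _ _ hi,
      piecewise_eq_of_mem _ _ _ (parent_mem_subtree hsubtree hi hne)]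
    exact hpcompat i (hsub hi) hiu

theorem isPartialAnswer_of_piecewise [DecidableEq ι]
    (hsubtree : ∀ u i, i ∈ subtree u ↔ ∃ n, parent^[n] i = u)
    (hchildren : ∀ u i, i ∈ children u ↔ (parent i = u ∧ i ≠ u))
    (hper : ∀ n i, 0 < n → IsPeriodicPt parent n i → IsFixedPt parent i) {u : ι} {t : τ}
    (ht : t ∈ tup u) {p : ι → τ}
    (hchild : ∀ c ∈ children u, compat t (p c) ∧
      IsPartialAnswer parent subtree tup compat d c (p c) ((subtree c).piecewise p fun _ => d))
    (hout : ∀ i ∉ (children u).biUnion subtree, p i = update (fun _ => d) u t i) :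
    IsPartialAnswer parent subtree tup compat d u t p := by
  have hu := notMem_biUnion_subtree_children hsubtree hchildren hper u
  have hpu : p u = t := by simpa using hout u hu
  have hdecomp := subtree_eq_insert_biUnion hsubtree hchildren u
  refine ⟨hpu, fun i hi => ?_, fun i hi hne => ?_, fun i hi => ?_⟩
  · rw [hdecomp, mem_insert, mem_biUnion] at hi
    obtain rfl | ⟨c, hc, hic⟩ := hi
    · exact hpu ▸ ht
    · rw [← piecewise_eq_of_mem (subtree c) p (fun _ => d) hic]
      exact (hchild c hc).2.2.1 i hic
  · rw [hdecomp, mem_insert, mem_biUnion] at hi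
    obtain ⟨c, hc, hic⟩ := hi.resolve_left hne
    obtain ⟨hcompat, -, -, hcompat', -⟩ := hchild c hc
    by_cases hic' : i = c
    · subst hic'
      rwa [((hchildren u i).1 hc).1, hpu]
    · have hpi := parent_mem_subtree hsubtree hic hic'
      simpa only [piecewise_eq_of_mem _ _ _ hic, piecewise_eq_of_mem _ _ _ hpi]
        using hcompat' i hic hic'
  · have hiu : i ≠ u := fun h => hi (h ▸ mem_subtree_self hsubtree u)
    rw [hdecomp, mem_insert, not_or] at hi
    simpa [hiu] using hout i hi.2

theorem pairwiseDisjoint_of_isPartialAnswer {S : ι → τ → Finset (ι → τ)}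
    (hS : ∀ u t p, p ∈ S u t ↔ IsPartialAnswer parent subtree tup compat d u t p) (c : ι)
    (s : Set τ) : s.PairwiseDisjoint (S c) :=
  fun t₁ _ t₂ _ hne => disjoint_left.2 fun q h₁ h₂ =>
    hne (((hS c t₁ q).1 h₁).1.symm.trans ((hS c t₂ q).1 h₂).1)

theorem mem_biUnion_filter_compat_iff {S : ι → τ → Finset (ι → τ)}
    [DecidableEq (ι → τ)] [∀ a b : τ, Decidable (compat a b)]
    (hS : ∀ u t p, p ∈ S u t ↔ IsPartialAnswer parent subtree tup compat d u t p)
    (hsubtree : ∀ u i, i ∈ subtree u ↔ ∃ n, parent^[n] i = u) {c : ι} {t : τ} {q : ι → τ} :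
    q ∈ ((tup c).filter fun t' => compat t t').biUnion (S c) ↔
      compat t (q c) ∧ IsPartialAnswer parent subtree tup compat d c (q c) q := by
  simp only [mem_biUnion, mem_filter, hS]
  constructor
  · rintro ⟨t', ⟨-, hcompat⟩, hq⟩
    obtain rfl := hq.1
    exact ⟨hcompat, hq⟩
  · rintro ⟨hcompat, hq⟩
    exact ⟨q c, ⟨hq.2.1 c (mem_subtree_self hsubtree c), hcompat⟩, hq⟩

theorem mem_iff_forall_piecewise_mem {S : ι → τ → Finset (ι → τ)} [DecidableEq ι]
    [DecidableEq (ι → τ)] [∀ a b : τ, Decidable (compat a b)]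
    (hS : ∀ u t p, p ∈ S u t ↔ IsPartialAnswer parent subtree tup compat d u t p)
    (hsubtree : ∀ u i, i ∈ subtree u ↔ ∃ n, parent^[n] i = u)
    (hchildren : ∀ u i, i ∈ children u ↔ (parent i = u ∧ i ≠ u))
    (hper : ∀ n i, 0 < n → IsPeriodicPt parent n i → IsFixedPt parent i) {u : ι} {t : τ}
    (ht : t ∈ tup u) (p : ι → τ) :
    p ∈ S u t ↔ (∀ c ∈ children u, (subtree c).piecewise p (fun _ => d) ∈
        ((tup c).filter fun t' => compat t t').biUnion (S c)) ∧
      ∀ i ∉ (children u).biUnion subtree, p i = update (fun _ => d) u t i := by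
  have hpw : ∀ c, (subtree c).piecewise p (fun _ => d) c = p c :=
    fun c => piecewise_eq_of_mem _ _ _ (mem_subtree_self hsubtree c)
  simp only [mem_biUnion_filter_compat_iff hS hsubtree, hpw, hS]
  refine ⟨fun hp => ⟨fun c hc => hp.piecewise_of_mem_children hsubtree hchildren hper hc, ?_⟩,
    fun ⟨hchild, hout⟩ => isPartialAnswer_of_piecewise hsubtree hchildren hper ht hchild hout⟩
  intro i hi
  by_cases hiu : i = u
  · subst hiu
    simpa using hp.1
  · rw [update_of_ne hiu]
    refine hp.2.2.2 i ?_
    rw [subtree_eq_insert_biUnion hsubtree hchildren u, mem_insert, not_or]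
    exact ⟨hiu, hi⟩

end PartialAnswers

/-- correctness of bottom-up semiring aggregation on a rooted tree.
The tree has node set `ι` with root `r` and parent function `parent`; node `u`
carries the tuples `tup u`; `subF u` is the subtree of `u`, `childs u` the children
of `u`, and `S u t` the finset of partial answers rooted at tuple `t` of node `u`
(one compatible tuple per subtree node, padded by `d` outside the subtree).
If `agg` satisfies the bottom-up message-passing recurrence, then `agg u t` equals
the semiring sum over all partial answers of the product of the values. -/
theorem semiring_aggregation_correct {A ι τ : Type*} [CommSemiring A]
    [Fintype ι] [DecidableEq ι] [DecidableEq τ]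
    (r : ι) (parent : ι → ι) (hroot : parent r = r) (hreach : ∀ i, ∃ n, parent^[n] i = r)
    (tup : ι → Finset τ) (val : τ → A) (compat : τ → τ → Prop)
    [∀ a b : τ, Decidable (compat a b)] (d : τ)
    (subF : ι → Finset ι) (hsubF : ∀ u i, i ∈ subF u ↔ ∃ n, parent^[n] i = u)
    (childs : ι → Finset ι) (hchilds : ∀ u i, i ∈ childs u ↔ (parent i = u ∧ i ≠ u))
    (S : ι → τ → Finset (ι → τ))
    (hS : ∀ u t (p : ι → τ), p ∈ S u t ↔
      (p u = t ∧ (∀ i ∈ subF u, p i ∈ tup i) ∧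
       (∀ i ∈ subF u, i ≠ u → compat (p (parent i)) (p i)) ∧
       (∀ i, i ∉ subF u → p i = d)))
    (agg : ι → τ → A)
    (hagg : ∀ u, ∀ t ∈ tup u, agg u t =
      val t * ∏ c ∈ childs u, ∑ t' ∈ (tup c).filter (fun t' => compat t t'), agg c t') :
    ∀ u, ∀ t ∈ tup u, agg u t = ∑ p ∈ S u t, ∏ i ∈ subF u, val (p i) := by
  have hper : ∀ n i, 0 < n → IsPeriodicPt parent n i → IsFixedPt parent i := fun n i hn hi =>
    (hi.eq_of_iterate_eq_isFixedPt hn hroot (hreach i).choose_spec) ▸ hroot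
  intro u
  induction hn : (subF u).card using Nat.strong_induction_on generalizing u with
  | _ n ih =>
  intro t ht
  have hchild : ∀ c ∈ childs u, ∑ t' ∈ (tup c).filter (fun t' => compat t t'), agg c t' =
      ∑ q ∈ ((tup c).filter fun t' => compat t t').biUnion (S c), ∏ i ∈ subF c, val (q i) := by
    intro c hc
    rw [sum_biUnion (pairwiseDisjoint_of_isPartialAnswer hS c _)]
    have hlt := hn ▸ card_subtree_lt_of_mem_children hsubF hchilds hper hc
    exact sum_congr rfl fun t' ht' => ih _ hlt c rfl t' (mem_filter.1 ht').1
  rw [hagg u t ht, prod_congr rfl hchild, prod_sum_eq_sum_glued (childs u) subF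
    (pairwiseDisjoint_subtree_children hsubF hchilds hper u) (fun _ => d) (update (fun _ => d) u t)
    _ (fun c _ q hq => ((mem_biUnion_filter_compat_iff hS hsubF).1 hq).2.2.2.2) (S u t)
    (mem_iff_forall_piecewise_mem hS hsubF hchilds hper ht), mul_sum]
  refine sum_congr rfl fun p hp => ?_
  rw [subtree_eq_insert_biUnion hsubF hchilds u,
    prod_insert (notMem_biUnion_subtree_children hsubF hchilds hper u), ((hS u t p).1 hp).1]
end

section
/- Interleaving enumeration correctness: Let A be a finite set with a function f : A → K into a linear order K, and suppose A = A_1 ∪ ... ∪ A_m (not necessarily disjoint) where each A_i can be listed as a sequence sorted nondecreasingly by a function f_i : A → K with f_i ≥ f on A_i, and for each a ∈ A there exists i such that a ∈ A_i and f_i(a) = f(a). Consider the process that repeatedly looks at the current head of each sequence, selects a head with minimal f_i-value (ties broken by smallest i), and outputs it only if i is the 'responsible' index of that element (the least i with a ∈ A_i and f_i(a) = f(a)), otherwise skips it; in either case that sequence advances. Then the subsequence of outputs contains every element of A exactly once, and in nondecreasing order of f. -/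
/-!
Without the filter, the process is a merge of the sequences by the key `(f i a, i)`: it lists
every pair `(i, a)` with `a ∈ L i` exactly once, in nondecreasing key order, since each sequence
is sorted and so its head is its key-minimal element. The filter keeps exactly the pairs
`(resp a, a)`, one for each `a ∈ A`, and on these the key is `(fval a, resp a)`, whose first
component is therefore nondecreasing along the output.
-/

/-- The current heads of the `m` sequences, tagged with their sequence index. -/
def heads {A : Type*} {m : ℕ} (st : Fin m → List A) : List (Fin m × A) :=
  (List.finRange m).filterMap fun i => (st i).head?.map fun a => (i, a)

/-- One fuelled run of the interleaving enumeration process: repeatedly pick the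
head with minimal `f`-value (ties broken by smallest sequence index), output it if
the proposing sequence is its responsible index, otherwise skip; always advance. -/
def runAux {A K : Type*} [LinearOrder K] {m : ℕ}
    (f : Fin m → A → K) (resp : A → Fin m) : ℕ → (Fin m → List A) → List A
  | 0, _ => []
  | fuel + 1, st =>
    match (heads st).argmin (fun p => toLex (f p.1 p.2, p.1)) with
    | none => []
    | some (i, a) =>
      let st' := Function.update st i (st i).tail
      if resp a = i then a :: runAux f resp fuel st' else runAux f resp fuel st'

theorem List.count_map_snd_filter {ι α : Type*} [DecidableEq ι] [DecidableEq α] (g : α → ι)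
    (l : List (ι × α)) (b : α) :
    ((l.filter fun p => g p.2 = p.1).map Prod.snd).count b = l.count (g b, b) := by
  simp only [List.count_eq_countP, List.countP_map, List.countP_filter]
  refine List.countP_congr fun p _ => ?_
  obtain ⟨i, a⟩ := p
  simp only [Function.comp_apply, beq_iff_eq, Bool.and_eq_true, decide_eq_true_eq, Prod.mk.injEq]
  constructor <;> rintro ⟨rfl, rfl⟩ <;> exact ⟨rfl, rfl⟩

section InterleavingEnumeration

variable {A K : Type*} [LinearOrder K] {m : ℕ}

def selectionKey (f : Fin m → A → K) (p : Fin m × A) : K ×ₗ Fin m :=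
  toLex (f p.1 p.2, p.1)

def selections (f : Fin m → A → K) : ℕ → (Fin m → List A) → List (Fin m × A)
  | 0, _ => []
  | fuel + 1, st =>
    match (heads st).argmin (selectionKey f) with
    | none => []
    | some (i, a) => (i, a) :: selections f fuel (Function.update st i (st i).tail)

theorem mem_heads {st : Fin m → List A} {i : Fin m} {a : A} :
    (i, a) ∈ heads st ↔ (st i).head? = some a := by
  simp [heads]

theorem heads_eq_nil_iff {st : Fin m → List A} : heads st = [] ↔ ∀ i, st i = [] := by
  refine ⟨fun h i => ?_, fun h => by simp [heads, h]⟩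
  rcases hi : st i with _ | ⟨a, t⟩
  · rfl
  · have : (i, a) ∈ heads st := mem_heads.mpr (by simp [hi])
    simp [h] at this

theorem selections_succ_of_argmin_eq_none {f : Fin m → A → K} {fuel : ℕ}
    {st : Fin m → List A} (h : (heads st).argmin (selectionKey f) = none) :
    selections f (fuel + 1) st = [] := by
  simp [selections, h]

theorem selections_succ_of_argmin_eq_some {f : Fin m → A → K} {fuel : ℕ}
    {st : Fin m → List A} {i : Fin m} {a : A}
    (h : (heads st).argmin (selectionKey f) = some (i, a)) :
    selections f (fuel + 1) st =
      (i, a) :: selections f fuel (Function.update st i (st i).tail) := by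
  simp [selections, h]

theorem runAux_eq_map_filter_selections (f : Fin m → A → K) (resp : A → Fin m) (fuel : ℕ)
    (st : Fin m → List A) :
    runAux f resp fuel st =
      ((selections f fuel st).filter fun p => resp p.2 = p.1).map Prod.snd := by
  induction fuel generalizing st with
  | zero => rfl
  | succ fuel ih =>
    have hrun : runAux f resp (fuel + 1) st =
        match (heads st).argmin (selectionKey f) with
        | none => []
        | some (i, a) =>
          if resp a = i then a :: runAux f resp fuel (Function.update st i (st i).tail)
          else runAux f resp fuel (Function.update st i (st i).tail) := rfl
    rcases hc : (heads st).argmin (selectionKey f) with _ | ⟨i, a⟩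
    · simp [hrun, hc, selections_succ_of_argmin_eq_none hc]
    · rw [hrun, hc, selections_succ_of_argmin_eq_some hc]
      by_cases hra : resp a = i <;> simp [hra, ih]

theorem eq_cons_of_argmin_heads_eq_some {f : Fin m → A → K} {st : Fin m → List A} {i : Fin m}
    {a : A} (h : (heads st).argmin (selectionKey f) = some (i, a)) :
    st i = a :: (st i).tail :=
  List.eq_cons_of_mem_head? (mem_heads.mp (List.argmin_mem h))

theorem update_tail_sublist (st : Fin m → List A) (i j : Fin m) :
    (Function.update st i (st i).tail j).Sublist (st j) := by
  by_cases hj : j = i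
  · subst hj; simpa using List.tail_sublist _
  · simp [Function.update_of_ne hj]

theorem sum_length_update_tail {st : Fin m → List A} {i : Fin m} (h : st i ≠ []) :
    ∑ j, (Function.update st i (st i).tail j).length + 1 = ∑ j, (st j).length := by
  rw [← Finset.add_sum_erase _ _ (Finset.mem_univ i),
    ← Finset.add_sum_erase _ _ (Finset.mem_univ i),
    Finset.sum_congr rfl fun j hj => by rw [Function.update_of_ne (Finset.ne_of_mem_erase hj)]]
  simp only [Function.update_self, List.length_tail]
  have := List.length_pos_iff.mpr h
  omega

theorem snd_mem_of_mem_selections {f : Fin m → A → K} {fuel : ℕ} {st : Fin m → List A}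
    {p : Fin m × A} (hp : p ∈ selections f fuel st) : p.2 ∈ st p.1 := by
  induction fuel generalizing st with
  | zero => simp [selections] at hp
  | succ fuel ih =>
    rcases hc : (heads st).argmin (selectionKey f) with _ | ⟨i, a⟩
    · simp [selections_succ_of_argmin_eq_none hc] at hp
    rw [selections_succ_of_argmin_eq_some hc, List.mem_cons] at hp
    rcases hp with rfl | hp
    · rw [eq_cons_of_argmin_heads_eq_some hc]
      exact List.mem_cons_self
    · exact (update_tail_sublist st i p.1).subset (ih hp)

theorem selectionKey_argmin_le {f : Fin m → A → K} {st : Fin m → List A}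
    (hsorted : ∀ i, (st i).Pairwise (fun a b => f i a ≤ f i b)) {p : Fin m × A}
    (hp : (heads st).argmin (selectionKey f) = some p) {j : Fin m} {x : A} (hx : x ∈ st j) :
    selectionKey f p ≤ selectionKey f (j, x) := by
  obtain ⟨b, t, hbt⟩ := List.exists_cons_of_ne_nil (List.ne_nil_of_mem hx)
  have hb : (j, b) ∈ heads st := mem_heads.mpr (by simp [hbt])
  have hbx : f j b ≤ f j x := by
    have := hsorted j
    rw [hbt] at this hx
    rcases List.mem_cons.mp hx with rfl | hx
    · exact le_rfl
    · exact List.rel_of_pairwise_cons this hx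
  calc selectionKey f p ≤ selectionKey f (j, b) := List.le_of_mem_argmin hb hp
    _ ≤ selectionKey f (j, x) := Prod.Lex.toLex_mono (Prod.mk_le_mk.mpr ⟨hbx, le_rfl⟩)

theorem selections_pairwise {f : Fin m → A → K} {fuel : ℕ} {st : Fin m → List A}
    (hsorted : ∀ i, (st i).Pairwise (fun a b => f i a ≤ f i b)) :
    (selections f fuel st).Pairwise (fun p q => selectionKey f p ≤ selectionKey f q) := by
  induction fuel generalizing st with
  | zero => exact List.Pairwise.nil
  | succ fuel ih =>
    rcases hc : (heads st).argmin (selectionKey f) with _ | ⟨i, a⟩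
    · simp [selections_succ_of_argmin_eq_none hc]
    rw [selections_succ_of_argmin_eq_some hc, List.pairwise_cons]
    refine ⟨fun q hq => selectionKey_argmin_le hsorted hc ?_,
      ih fun j => (hsorted j).sublist (update_tail_sublist st i j)⟩
    exact (update_tail_sublist st i q.1).subset (snd_mem_of_mem_selections hq)

theorem count_selections [DecidableEq A] {f : Fin m → A → K} {fuel : ℕ}
    {st : Fin m → List A} (hfuel : ∑ i, (st i).length ≤ fuel) (j : Fin m) (x : A) :
    (selections f fuel st).count (j, x) = (st j).count x := by
  induction fuel generalizing st with
  | zero =>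
    have : st j = [] := List.length_eq_zero_iff.mp
      (Finset.sum_eq_zero_iff.mp (Nat.le_zero.mp hfuel) j (Finset.mem_univ j))
    simp [selections, this]
  | succ fuel ih =>
    rcases hc : (heads st).argmin (selectionKey f) with _ | ⟨i, a⟩
    · have hempty := heads_eq_nil_iff.mp (List.argmin_eq_none.mp hc)
      rw [selections_succ_of_argmin_eq_none hc, hempty j]
      rfl
    have hcons := eq_cons_of_argmin_heads_eq_some hc
    have hfuel' := sum_length_update_tail (st := st) (i := i) (hcons ▸ List.cons_ne_nil _ _)
    rw [selections_succ_of_argmin_eq_some hc, List.count_cons, ih (by omega)]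
    by_cases hj : j = i
    · subst hj
      conv_rhs => rw [hcons]
      simp [List.count_cons]
    · simp [hj, Ne.symm hj]

theorem pairwise_map_snd_filter_selections {f : Fin m → A → K} {fuel : ℕ}
    {st : Fin m → List A} (hsorted : ∀ i, (st i).Pairwise (fun a b => f i a ≤ f i b))
    {fval : A → K} {resp : A → Fin m}
    (hresp : ∀ a, a ∈ st (resp a) → f (resp a) a = fval a) :
    (((selections f fuel st).filter fun p => resp p.2 = p.1).map Prod.snd).Pairwise
      (fun a b => fval a ≤ fval b) := by
  have hkey : ∀ p ∈ (selections f fuel st).filter fun p => resp p.2 = p.1,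
      selectionKey f p = toLex (fval p.2, p.1) := by
    rintro ⟨i, a⟩ hp
    obtain ⟨hp, hrp⟩ := List.mem_filter.mp hp
    obtain rfl : resp a = i := of_decide_eq_true hrp
    simp only [selectionKey, hresp a (snd_mem_of_mem_selections hp)]
  rw [List.pairwise_map]
  refine ((selections_pairwise hsorted).filter _).imp_of_mem fun hp hq hpq => ?_
  rw [hkey _ hp, hkey _ hq] at hpq
  exact Prod.Lex.monotone_fst _ _ hpq

end InterleavingEnumeration

theorem interleaving_enumeration_correct_general {A K : Type*} [LinearOrder K] [DecidableEq A]
    (m : ℕ) (L : Fin m → List A) (f : Fin m → A → K) (fval : A → K) (Aset : Finset A)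
    (hmem : ∀ i, ∀ a ∈ L i, a ∈ Aset)
    (hnodup : ∀ i, (L i).Nodup)
    (hsorted : ∀ i, (L i).Pairwise (fun a b => f i a ≤ f i b))
    (resp : A → Fin m)
    (hresp : ∀ a ∈ Aset, a ∈ L (resp a) ∧ f (resp a) a = fval a ∧
      ∀ j, j < resp a → a ∈ L j → f j a ≠ fval a) :
    let out := runAux f resp (∑ i, (L i).length) L
    (∀ a, a ∈ out ↔ a ∈ Aset) ∧ out.Nodup ∧
      out.Pairwise (fun a b => fval a ≤ fval b) := by
  intro out
  have hout : out = ((selections f (∑ i, (L i).length) L).filter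
      fun p => resp p.2 = p.1).map Prod.snd :=
    runAux_eq_map_filter_selections f resp _ L
  have hcount : ∀ a, out.count a = (L (resp a)).count a := fun a => by
    rw [hout, List.count_map_snd_filter, count_selections le_rfl]
  refine ⟨fun a => ?_, ?_, ?_⟩
  · rw [← List.count_pos_iff, hcount, List.count_pos_iff]
    exact ⟨hmem _ a, fun ha => (hresp a ha).1⟩
  · exact List.nodup_iff_count_le_one.mpr fun a =>
      hcount a ▸ List.nodup_iff_count_le_one.mp (hnodup _) a
  · rw [hout]
    exact pairwise_map_snd_filter_selections hsorted fun a ha => (hresp a (hmem _ a ha)).2.1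

/-- correctness of the interleaving enumeration: if each sequence
`L i` lists (without duplicates) a subset of `A`, sorted nondecreasingly by `f i`,
with `f i ≥ fval` on it, every `a ∈ A` occurs in some sequence achieving
`f i a = fval a`, and `resp a` is the least such index, then the filtered merge
outputs exactly the elements of `A`, each once, in nondecreasing `fval`-order. -/
theorem interleaving_enumeration_correct {A K : Type*} [LinearOrder K] [DecidableEq A]
    (m : ℕ) (L : Fin m → List A) (f : Fin m → A → K) (fval : A → K) (Aset : Finset A)
    (hmem : ∀ i, ∀ a ∈ L i, a ∈ Aset)
    (hcover : ∀ a ∈ Aset, ∃ i, a ∈ L i ∧ f i a = fval a)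
    (hnodup : ∀ i, (L i).Nodup)
    (hsorted : ∀ i, (L i).Pairwise (fun a b => f i a ≤ f i b))
    (hge : ∀ i, ∀ a ∈ L i, fval a ≤ f i a)
    (resp : A → Fin m)
    (hresp : ∀ a ∈ Aset, a ∈ L (resp a) ∧ f (resp a) a = fval a ∧
      ∀ j, j < resp a → a ∈ L j → f j a ≠ fval a) :
    let out := runAux f resp (∑ i, (L i).length) L
    (∀ a, a ∈ out ↔ a ∈ Aset) ∧ out.Nodup ∧
      out.Pairwise (fun a b => fval a ≤ fval b) :=
  interleaving_enumeration_correct_general m L f fval Aset hmem hnodup hsorted resp hresp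
end
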